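/- For all constants σ₁, σ₂, δ, ρ, p₁, p₂ > 0, the quartic polynomial Ḡ(λ) := G₁(λ)G₂(λ) − p₁p₂ has exactly four distinct real roots λ₁ < λ₂ < 0 < λ₃ < λ₄; in particular, Ḡ has exactly two strictly negative and two strictly positive real roots, all simple. -/
import Mathlib


/-- `G(λ) = (1/2)σ²λ(λ − 1) − (δ − σ²)λ − (ρ + δ + p)`, the characteristic polynomial of
one regime of the optimal stopping problem. -/
noncomputable def Gquad (σ δ ρ p lam : ℝ) : ℝ :=
  (1/2) * σ^2 * lam * (lam - 1) - (δ - σ^2) * lam - (ρ + δ + p)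

/-- The quartic polynomial `Ḡ(λ) = G₁(λ)G₂(λ) − p₁p₂`. -/
noncomputable def GBar (σ₁ σ₂ δ ρ p₁ p₂ lam : ℝ) : ℝ :=
  Gquad σ₁ δ ρ p₁ lam * Gquad σ₂ δ ρ p₂ lam - p₁ * p₂

open Polynomial Filter Set


private lemma quad_root_neg (a b c : ℝ) (ha : 0 < a) (hc : c < 0) :
    ∃ r : ℝ, r < 0 ∧ a*r^2 + b*r + c = 0 := by
  have hd : (0:ℝ) < b^2 - 4*a*c := by nlinarith
  have hs2 : Real.sqrt (b^2 - 4*a*c) ^ 2 = b^2 - 4*a*c := Real.sq_sqrt hd.le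
  have hs0 : 0 ≤ Real.sqrt (b^2 - 4*a*c) := Real.sqrt_nonneg _
  set s := Real.sqrt (b^2 - 4*a*c)
  refine ⟨(-b - s)/(2*a), ?_, ?_⟩
  · apply div_neg_of_neg_of_pos _ (by positivity)
    nlinarith
  · field_simp
    nlinarith [hs2]

private lemma quad_root_pos (a b c : ℝ) (ha : 0 < a) (hc : c < 0) :
    ∃ r : ℝ, 0 < r ∧ a*r^2 + b*r + c = 0 := by
  have hd : (0:ℝ) < b^2 - 4*a*c := by nlinarith
  have hs2 : Real.sqrt (b^2 - 4*a*c) ^ 2 = b^2 - 4*a*c := Real.sq_sqrt hd.le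
  have hs0 : 0 ≤ Real.sqrt (b^2 - 4*a*c) := Real.sqrt_nonneg _
  set s := Real.sqrt (b^2 - 4*a*c)
  refine ⟨(-b + s)/(2*a), ?_, ?_⟩
  · apply div_pos _ (by positivity)
    nlinarith
  · field_simp
    nlinarith [hs2]

/-- For all constants `σ₁, σ₂, δ, ρ, p₁, p₂ > 0`, the quartic `Ḡ = G₁G₂ − p₁p₂` has
exactly four distinct real roots `λ₁ < λ₂ < 0 < λ₃ < λ₄`, all simple: its zero set is
`{λ₁, λ₂, λ₃, λ₄}` (so exactly two strictly negative and two strictly positive roots),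
and the derivative of `Ḡ` does not vanish at any of the roots. -/
theorem GBar_four_simple_roots (σ₁ σ₂ δ ρ p₁ p₂ : ℝ)
    (hσ₁ : 0 < σ₁) (hσ₂ : 0 < σ₂) (hδ : 0 < δ) (hρ : 0 < ρ) (hp₁ : 0 < p₁) (hp₂ : 0 < p₂) :
    ∃ l₁ l₂ l₃ l₄ : ℝ, l₁ < l₂ ∧ l₂ < 0 ∧ 0 < l₃ ∧ l₃ < l₄ ∧
      {lam : ℝ | GBar σ₁ σ₂ δ ρ p₁ p₂ lam = 0} = {l₁, l₂, l₃, l₄} ∧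
      ∀ lam ∈ ({l₁, l₂, l₃, l₄} : Set ℝ), deriv (GBar σ₁ σ₂ δ ρ p₁ p₂) lam ≠ 0 := by
  -- quadratic coefficients
  obtain ⟨a₁, ha₁def⟩ : ∃ x : ℝ, x = σ₁^2/2 := ⟨_, rfl⟩
  obtain ⟨b₁, hb₁def⟩ : ∃ x : ℝ, x = σ₁^2/2 - δ := ⟨_, rfl⟩
  obtain ⟨c₁, hc₁def⟩ : ∃ x : ℝ, x = -(ρ+δ+p₁) := ⟨_, rfl⟩
  obtain ⟨a₂, ha₂def⟩ : ∃ x : ℝ, x = σ₂^2/2 := ⟨_, rfl⟩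
  obtain ⟨b₂, hb₂def⟩ : ∃ x : ℝ, x = σ₂^2/2 - δ := ⟨_, rfl⟩
  obtain ⟨c₂, hc₂def⟩ : ∃ x : ℝ, x = -(ρ+δ+p₂) := ⟨_, rfl⟩
  have ha₁ : 0 < a₁ := by rw [ha₁def]; positivity
  have ha₂ : 0 < a₂ := by rw [ha₂def]; positivity
  -- the quartic polynomial
  obtain ⟨A, hAdef⟩ : ∃ x : ℝ, x = a₁*a₂ := ⟨_, rfl⟩
  have hA : 0 < A := by rw [hAdef]; positivity
  obtain ⟨P, hPdef⟩ : ∃ P : ℝ[X], P = C A * X^4 + C (a₁*b₂+a₂*b₁) * X^3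
      + C (a₁*c₂+a₂*c₁+b₁*b₂) * X^2 + C (b₁*c₂+b₂*c₁) * X + C (c₁*c₂ - p₁*p₂) := ⟨_, rfl⟩
  have hG1 : ∀ x, Gquad σ₁ δ ρ p₁ x = a₁*x^2 + b₁*x + c₁ := by
    intro x; simp only [Gquad, ha₁def, hb₁def, hc₁def]; ring
  have hG2 : ∀ x, Gquad σ₂ δ ρ p₂ x = a₂*x^2 + b₂*x + c₂ := by
    intro x; simp only [Gquad, ha₂def, hb₂def, hc₂def]; ring
  have heval : ∀ x, P.eval x = GBar σ₁ σ₂ δ ρ p₁ p₂ x := by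
    intro x
    simp only [hPdef, hAdef, GBar, hG1, hG2, eval_add, eval_mul, eval_C, eval_pow, eval_X]
    ring
  have hdeg : P.natDegree = 4 := by
    rw [hPdef]; compute_degree!
    exact hA.ne'
  have hdeg' : P.degree = 4 := by
    rw [hPdef]; compute_degree!
    exact hA.ne'
  have hP0 : P ≠ 0 := fun h => by simp [h] at hdeg
  have hlc : P.leadingCoeff = A := by
    rw [Polynomial.leadingCoeff, hdeg, hPdef]
    simp only [coeff_add, coeff_C_mul, coeff_X_pow, coeff_X, coeff_C]
    norm_num
  have hc₁neg : c₁ < 0 := by rw [hc₁def]; nlinarith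
  obtain ⟨γm, hγm0, hγmroot⟩ := quad_root_neg a₁ b₁ c₁ ha₁ hc₁neg
  obtain ⟨γp, hγp0, hγproot⟩ := quad_root_pos a₁ b₁ c₁ ha₁ hc₁neg
  have hG1γm : Gquad σ₁ δ ρ p₁ γm = 0 := by rw [hG1]; exact hγmroot
  have hG1γp : Gquad σ₁ δ ρ p₁ γp = 0 := by rw [hG1]; exact hγproot
  have hPγm : P.eval γm < 0 := by
    rw [heval]; simp [GBar, hG1γm]; positivity
  have hPγp : P.eval γp < 0 := by
    rw [heval]; simp [GBar, hG1γp]; positivity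
  have hP00 : 0 < P.eval 0 := by
    rw [heval]
    have : GBar σ₁ σ₂ δ ρ p₁ p₂ 0 = (ρ+δ+p₁)*(ρ+δ+p₂) - p₁*p₂ := by
      simp [GBar, Gquad]; ring
    rw [this]; nlinarith
  -- behaviour at infinity
  have htop : Tendsto (fun x => P.eval x) atTop atTop := by
    apply P.tendsto_atTop_of_leadingCoeff_nonneg
    · rw [hdeg']; norm_num
    · rw [hlc]; exact hA.le
  obtain ⟨Q, hQdef⟩ : ∃ Q : ℝ[X], Q = C A * X^4 - C (a₁*b₂+a₂*b₁) * X^3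
      + C (a₁*c₂+a₂*c₁+b₁*b₂) * X^2 - C (b₁*c₂+b₂*c₁) * X + C (c₁*c₂ - p₁*p₂) := ⟨_, rfl⟩
  have hQeval : ∀ x, Q.eval x = P.eval (-x) := by
    intro x
    simp only [hQdef, hPdef, eval_add, eval_sub, eval_mul, eval_C, eval_pow, eval_X]
    ring
  have hQdeg : Q.degree = 4 := by
    rw [hQdef]; compute_degree!
    exact hA.ne'
  have hQlc : Q.leadingCoeff = A := by
    have hQnd : Q.natDegree = 4 := natDegree_eq_of_degree_eq_some hQdeg
    rw [Polynomial.leadingCoeff, hQnd, hQdef]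
    simp only [coeff_add, coeff_sub, coeff_C_mul, coeff_X_pow, coeff_X, coeff_C]
    norm_num
  have hqtop : Tendsto (fun x => Q.eval x) atTop atTop := by
    apply Q.tendsto_atTop_of_leadingCoeff_nonneg
    · rw [hQdeg]; norm_num
    · rw [hQlc]; exact hA.le
  -- pick endpoints
  obtain ⟨M, hMγ, hMpos⟩ : ∃ M, γp < M ∧ 0 < P.eval M := by
    have := (htop.eventually (eventually_gt_atTop 0)).and (eventually_gt_atTop γp)
    obtain ⟨M, h1, h2⟩ := this.exists
    exact ⟨M, h2, h1⟩
  obtain ⟨N, hNγ, hNpos⟩ : ∃ N, N < γm ∧ 0 < P.eval N := by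
    have := (hqtop.eventually (eventually_gt_atTop 0)).and (eventually_gt_atTop (-γm))
    obtain ⟨N, h1, h2⟩ := this.exists
    refine ⟨-N, by linarith, ?_⟩
    rw [← hQeval]; exact h1
  have hcont : ContinuousOn (fun x => P.eval x) (Set.univ) := (P.continuous_aeval).continuousOn
  have hcP : ∀ a b : ℝ, ContinuousOn (fun x => P.eval x) (Set.Icc a b) :=
    fun a b => (P.continuous_aeval).continuousOn
  -- four roots by IVT
  obtain ⟨l₁, hl₁mem, hl₁⟩ : ∃ l ∈ Set.Ioo N γm, P.eval l = 0 := by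
    have := intermediate_value_Ioo' hNγ.le (hcP N γm)
    obtain ⟨l, hl, hl0⟩ := this ⟨hPγm, hNpos⟩
    exact ⟨l, hl, hl0⟩
  obtain ⟨l₂, hl₂mem, hl₂⟩ : ∃ l ∈ Set.Ioo γm 0, P.eval l = 0 := by
    have := intermediate_value_Ioo hγm0.le (hcP γm 0)
    obtain ⟨l, hl, hl0⟩ := this ⟨hPγm, hP00⟩
    exact ⟨l, hl, hl0⟩
  obtain ⟨l₃, hl₃mem, hl₃⟩ : ∃ l ∈ Set.Ioo 0 γp, P.eval l = 0 := by
    have := intermediate_value_Ioo' hγp0.le (hcP 0 γp)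
    obtain ⟨l, hl, hl0⟩ := this ⟨hPγp, hP00⟩
    exact ⟨l, hl, hl0⟩
  obtain ⟨l₄, hl₄mem, hl₄⟩ : ∃ l ∈ Set.Ioo γp M, P.eval l = 0 := by
    have := intermediate_value_Ioo hMγ.le (hcP γp M)
    obtain ⟨l, hl, hl0⟩ := this ⟨hPγp, hMpos⟩
    exact ⟨l, hl, hl0⟩
  have h12 : l₁ < l₂ := lt_trans hl₁mem.2 hl₂mem.1
  have h20 : l₂ < 0 := hl₂mem.2
  have h03 : 0 < l₃ := hl₃mem.1
  have h34 : l₃ < l₄ := lt_trans hl₃mem.2 hl₄mem.1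
  have h23 : l₂ < l₃ := lt_trans h20 h03
  classical
  have hne12 : l₁ ≠ l₂ := h12.ne
  have hne13 : l₁ ≠ l₃ := (h12.trans h23).ne
  have hne14 : l₁ ≠ l₄ := ((h12.trans h23).trans h34).ne
  have hne23 : l₂ ≠ l₃ := h23.ne
  have hne24 : l₂ ≠ l₄ := (h23.trans h34).ne
  have hne34 : l₃ ≠ l₄ := h34.ne
  set m : Multiset ℝ := {l₁, l₂, l₃, l₄} with hmdef
  have hcnt : ∀ l : ℝ, l ∈ ({l₁, l₂, l₃, l₄} : Set ℝ) → Multiset.count l m = 1 := by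
    intro l hl
    rcases hl with rfl | rfl | rfl | rfl
    · simp [hmdef, Multiset.count_cons, Multiset.count_singleton, hne12, hne13, hne14]
    · simp [hmdef, Multiset.count_cons, Multiset.count_singleton, hne12.symm, hne23, hne24]
    · simp [hmdef, Multiset.count_cons, Multiset.count_singleton, hne13.symm, hne23.symm, hne34]
    · simp [hmdef, Multiset.count_cons, Multiset.count_singleton, hne14.symm, hne24.symm,
        hne34.symm]
  have hroot : ∀ l : ℝ, l ∈ ({l₁, l₂, l₃, l₄} : Set ℝ) → P.IsRoot l := by
    intro l hl
    rcases hl with rfl | rfl | rfl | rfl <;> assumption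
  have hmle : m ≤ P.roots := by
    rw [Multiset.le_iff_count]
    intro x
    by_cases hx : x ∈ ({l₁, l₂, l₃, l₄} : Set ℝ)
    · rw [hcnt x hx, count_roots]
      exact (rootMultiplicity_pos hP0).2 (hroot x hx)
    · have : Multiset.count x m = 0 := by
        simp only [Set.mem_insert_iff, Set.mem_singleton_iff, not_or] at hx
        simp [hmdef, Multiset.count_cons, Multiset.count_singleton, hx.1, hx.2.1, hx.2.2.1,
          hx.2.2.2]
      rw [this]; exact Nat.zero_le _
  have hcardm : Multiset.card m = 4 := by simp [hmdef]
  have hroots_eq : m = P.roots := by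
    refine Multiset.eq_of_le_of_card_le hmle ?_
    rw [hcardm]
    calc Multiset.card P.roots ≤ P.natDegree := P.card_roots'
    _ = 4 := hdeg
  have hderiv : ∀ x : ℝ, deriv (GBar σ₁ σ₂ δ ρ p₁ p₂) x = P.derivative.eval x := by
    intro x
    have hfun : GBar σ₁ σ₂ δ ρ p₁ p₂ = fun y => P.eval y := funext fun y => (heval y).symm
    rw [hfun, Polynomial.deriv]
  refine ⟨l₁, l₂, l₃, l₄, h12, h20, h03, h34, ?_, ?_⟩
  · ext x
    simp only [Set.mem_setOf_eq, ← heval]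
    constructor
    · intro hx
      have hxr : x ∈ P.roots := (mem_roots hP0).2 hx
      rw [← hroots_eq] at hxr
      simpa [hmdef, Set.mem_insert_iff] using hxr
    · intro hx
      rcases hx with rfl | rfl | rfl | rfl <;> assumption
  · intro lam hlam hcontra
    rw [hderiv lam] at hcontra
    have hD0 : P.derivative ≠ 0 := by
      intro h
      have h0 := Polynomial.natDegree_eq_zero_of_derivative_eq_zero h
      rw [hdeg] at h0
      exact (by norm_num : (4:ℕ) ≠ 0) h0
    have h1 : rootMultiplicity lam P = 1 := by
      rw [← count_roots, ← hroots_eq]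
      exact hcnt lam hlam
    have h2 : rootMultiplicity lam P.derivative = 0 := by
      rw [Polynomial.derivative_rootMultiplicity_of_root (hroot lam hlam), h1]
    have h3 : 0 < rootMultiplicity lam P.derivative :=
      (rootMultiplicity_pos hD0).2 hcontra
    omega
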